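/- arXiv:2209.09303 — 5 statements merged into one kernel-verified Lean document; each statement's English description precedes it below -/
import Mathlib

section
/- Let L = (4672/37059435)·√7·π^7. Then the real number π^7 · 2^12 · (1 + 7^{-3}) / (7^{7/2} · 6! · L) is not an integer (it lies strictly between 18 and 19). -/
open Real

theorem stmt_4 (L K : ℝ) (hL : L = (4672 / 37059435) * Real.sqrt 7 * π ^ 7)
    (hK : K = π ^ 7 * 2 ^ 12 * (1 + (7 : ℝ)⁻¹ ^ 3) / ((7 : ℝ) ^ ((7 : ℝ) / 2) * (Nat.factorial 6) * L)) :
    (18 < K ∧ K < 19) ∧ ∀ m : ℤ, K ≠ m := by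
  have hrpow : (7 : ℝ) ^ ((7 : ℝ) / 2) = 7 ^ 3 * Real.sqrt 7 := by
    have : ((7 : ℝ) / 2) = (3 : ℕ) + (1 / 2 : ℝ) := by norm_num
    rw [this, Real.rpow_add (by norm_num), Real.rpow_natCast,
      ← Real.sqrt_eq_rpow]
  have hs : Real.sqrt 7 * Real.sqrt 7 = 7 := Real.mul_self_sqrt (by norm_num)
  have hspos : (0 : ℝ) < Real.sqrt 7 := Real.sqrt_pos.mpr (by norm_num)
  have hpi : π ≠ 0 := Real.pi_ne_zero
  have hKval : K = 1376 / 73 := by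
    have hsq : Real.sqrt 7 ^ 2 = 7 := Real.sq_sqrt (by norm_num)
    rw [hK, hL, hrpow]
    simp only [Nat.factorial]
    field_simp
    ring_nf
    rw [hsq]
    ring
  refine ⟨⟨by rw [hKval]; norm_num, by rw [hKval]; norm_num⟩, ?_⟩
  intro m hm
  rw [hKval] at hm
  have h1 : (18 : ℝ) < (m : ℝ) := by rw [← hm]; norm_num
  have h2 : ((m : ℝ)) < 19 := by rw [← hm]; norm_num
  have : (18 : ℤ) < m := by exact_mod_cast h1
  have : m < 19 := by exact_mod_cast h2
  omega
end

section
/- With ζ(10) = π^{10}/93555, the quantity (2π)^{10} · (6 + 2^9) / (6 · (3^5 + 1) · 9! · ζ(10)) equals 5698/61, and in particular is not an integer. -/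
open Real

theorem stmt_13 (K : ℝ)
    (hK : K = (2 * π) ^ 10 * (6 + 2 ^ 9) / (6 * ((3 : ℝ) ^ 5 + 1) * (Nat.factorial 9) * (π ^ 10 / 93555))) :
    K = 5698 / 61 ∧ ∀ m : ℤ, K ≠ m := by
  have hπ : π ≠ 0 := Real.pi_ne_zero
  have hfac : (Nat.factorial 9 : ℝ) = 362880 := by norm_num [Nat.factorial]
  have hK' : K = 5698 / 61 := by
    rw [hK, hfac]
    field_simp
    ring
  refine ⟨hK', fun m hm => ?_⟩
  rw [hK'] at hm
  have h : (5698 : ℝ) = m * 61 := by field_simp at hm; linarith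
  have h' : (5698 : ℤ) = m * 61 := by exact_mod_cast h
  omega
end

section
/- Let L = (3236/167403915)·√3·π^9. Then the quantity (2π)^9 · (5·(1 − 3^{-4}) + (1 + 3^{-4})·(2^8 − 1)) / (6 · 3^{9/2} · 8! · L) is not an integer (it lies strictly between 118 and 119). -/
open Real

theorem stmt_17 (L K : ℝ) (hL : L = (3236 / 167403915) * Real.sqrt 3 * π ^ 9)
    (hK : K = (2 * π) ^ 9 * (5 * (1 - (3 : ℝ)⁻¹ ^ 4) + (1 + (3 : ℝ)⁻¹ ^ 4) * (2 ^ 8 - 1)) /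
      (6 * (3 : ℝ) ^ ((9 : ℝ) / 2) * (Nat.factorial 8) * L)) :
    (118 < K ∧ K < 119) ∧ ∀ m : ℤ, K ≠ m := by
  have hs : Real.sqrt 3 * Real.sqrt 3 = 3 := Real.mul_self_sqrt (by norm_num)
  have hs0 : Real.sqrt 3 ≠ 0 := by positivity
  have hpi : π ≠ 0 := Real.pi_ne_zero
  have h3 : (3 : ℝ) ^ ((9 : ℝ) / 2) = 81 * Real.sqrt 3 := by
    have hs2 : Real.sqrt 3 ^ 2 = 3 := Real.sq_sqrt (by norm_num)
    rw [show (9 : ℝ) / 2 = (1 / 2) * (9 : ℕ) by norm_num,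
      Real.rpow_mul (by norm_num), Real.rpow_natCast, ← Real.sqrt_eq_rpow,
      show Real.sqrt 3 ^ 9 = (Real.sqrt 3 ^ 2) ^ 4 * Real.sqrt 3 from by ring, hs2]
    norm_num
  have hKval : K = 95895 / 809 := by
    have hs2 : Real.sqrt 3 ^ 2 = 3 := Real.sq_sqrt (by norm_num)
    rw [hK, hL, h3]
    norm_num [Nat.factorial]
    field_simp
    ring_nf
    rw [hs2]
    ring
  constructor
  · constructor <;> rw [hKval] <;> norm_num
  · intro m
    rw [hKval]
    intro h
    have : (809 : ℝ) * m = 95895 := by linarith [h]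
    have h2 : (809 : ℤ) * m = 95895 := by exact_mod_cast this
    omega
end

section
/- For every odd natural number n with n ≥ 7, the inequality (2π)^{n+1} · 2^n / (2 · (7^{(n+1)/2} − 1) · n!) < 2n + 2 holds. -/
/-!
Writing `n = 2k + 1`, the numerator is `(16π²)^(k+1) / 2`, so after `16π² < 160` it suffices
that `160^(k+1) ≤ 64 (7^(k+1) - 1) (2k+1)!` for `k ≥ 3`. This holds at `k = 3`, and from `k` to
`k + 1` the left side grows by the factor `160`, the right side by at least `7 · 8 · 9 = 504`.
-/

open Real Nat

lemma sixteen_mul_pi_sq_lt : 16 * π ^ 2 < 160 := by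
  nlinarith [pi_lt_d2, pi_pos]

lemma cast_factorial_add_two (m : ℕ) :
    ((m + 2)! : ℝ) = (m + 2) * (m + 1) * m ! := by
  push_cast [factorial_succ]
  ring

lemma one_hundred_sixty_pow_le_mul_factorial (k : ℕ) (hk : 3 ≤ k) :
    (160 : ℝ) ^ (k + 1) ≤ 64 * ((7 : ℝ) ^ (k + 1) - 1) * (2 * k + 1)! := by
  induction k, hk using Nat.le_induction with
  | base => norm_num [factorial]
  | succ k hk ih =>
    have hpow : 7 * ((7 : ℝ) ^ (k + 1) - 1) ≤ 7 ^ (k + 2) - 1 := by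
      rw [pow_succ _ (k + 1)]
      linarith
    have hfact : 72 * ((2 * k + 1)! : ℝ) ≤ (2 * (k + 1) + 1)! := by
      rw [show 2 * (k + 1) + 1 = 2 * k + 1 + 2 by ring, cast_factorial_add_two]
      have hk' : (3 : ℝ) ≤ k := by exact_mod_cast hk
      gcongr
      push_cast
      nlinarith
    have hseven : (0 : ℝ) < 7 ^ (k + 1) - 1 :=
      sub_pos.2 (one_lt_pow₀ (by norm_num) k.succ_ne_zero)
    calc (160 : ℝ) ^ (k + 1 + 1) = 160 * 160 ^ (k + 1) := pow_succ' _ _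
      _ ≤ 160 * (64 * ((7 : ℝ) ^ (k + 1) - 1) * (2 * k + 1)!) := by gcongr
      _ ≤ 64 * (7 * ((7 : ℝ) ^ (k + 1) - 1)) * (72 * (2 * k + 1)!) := by
        have : (0 : ℝ) ≤ ((7 : ℝ) ^ (k + 1) - 1) * (2 * k + 1)! := by positivity
        nlinarith
      _ ≤ 64 * ((7 : ℝ) ^ (k + 1 + 1) - 1) * (2 * (k + 1) + 1)! :=
        mul_le_mul (by linarith) hfact (by positivity) (by linarith)

theorem stmt_18 (n : ℕ) (hodd : Odd n) (hn : 7 ≤ n) :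
    (2 * π) ^ (n + 1) * 2 ^ n / (2 * ((7 : ℝ) ^ ((n + 1) / 2) - 1) * (Nat.factorial n)) <
      2 * n + 2 := by
  obtain ⟨k, rfl⟩ := hodd
  have hk : 3 ≤ k := by omega
  rw [show (2 * k + 1 + 1) / 2 = k + 1 by omega]
  have hnum : (2 * π) ^ (2 * k + 1 + 1) * 2 ^ (2 * k + 1) = (16 * π ^ 2) ^ (k + 1) / 2 := by
    rw [mul_pow (16 : ℝ), ← pow_mul, show (16 : ℝ) = 2 ^ 4 by norm_num, ← pow_mul]
    ring
  have hden : 0 < 2 * ((7 : ℝ) ^ (k + 1) - 1) * (2 * k + 1)! := by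
    have : (0 : ℝ) < 7 ^ (k + 1) - 1 := sub_pos.2 (one_lt_pow₀ (by norm_num) k.succ_ne_zero)
    have := factorial_pos (2 * k + 1)
    positivity
  rw [hnum, div_lt_iff₀ hden]
  calc (16 * π ^ 2) ^ (k + 1) / 2 < 160 ^ (k + 1) / 2 := by
        gcongr
        exact sixteen_mul_pi_sq_lt
    _ ≤ 16 * (2 * ((7 : ℝ) ^ (k + 1) - 1) * (2 * k + 1)!) := by
        linarith [one_hundred_sixty_pow_le_mul_factorial k hk]
    _ ≤ _ := by
        gcongr
        have : (3 : ℝ) ≤ k := by exact_mod_cast hk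
        push_cast
        linarith
end

section
/- For every odd natural number n with n ≥ 11, the inequality (2π)^{n+1} · (6 + 2^n) / (6 · (3^{(n+1)/2} − 1) · n!) < 7n + 7 holds. -/
open Real

lemma key_19 (m : ℕ) (hm : 6 ≤ m) :
    ((63:ℝ)/10)^(2*m) * (6 + 2^(2*m-1)) <
      (14*m) * (6 * ((3:ℝ)^m - 1) * (Nat.factorial (2*m-1))) := by
  induction m, hm using Nat.le_induction with
  | base =>
      norm_num [Nat.factorial]
  | succ m hm ih =>
      have h2m : 2*(m+1)-1 = (2*m-1)+1+1 := by omega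
      have hfac : (Nat.factorial (2*(m+1)-1) : ℝ)
          = ((2*m:ℝ)+1) * ((2*m:ℝ)) * (Nat.factorial (2*m-1)) := by
        rw [h2m, Nat.factorial_succ, Nat.factorial_succ]
        push_cast
        have : ((2*m-1 : ℕ) : ℝ) = 2*(m:ℝ) - 1 := by
          have : (1:ℕ) ≤ 2*m := by omega
          push_cast [Nat.cast_sub this]
          ring
        rw [this]; ring
      set A : ℝ := ((63:ℝ)/10)^(2*m) with hA
      set B : ℝ := (2:ℝ)^(2*m-1) with hB
      set C : ℝ := (3:ℝ)^m with hC
      set F : ℝ := ((Nat.factorial (2*m-1) : ℕ) : ℝ) with hF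
      have hApos : 0 < A := by positivity
      have hBpos : (0:ℝ) < B := by positivity
      have hClb : (729:ℝ) ≤ C := by
        calc (729:ℝ) = 3^6 := by norm_num
        _ ≤ 3^m := by exact pow_le_pow_right₀ (by norm_num) hm
      have hFpos : (1:ℝ) ≤ F := by
        rw [hF]; exact_mod_cast Nat.one_le_iff_ne_zero.mpr (Nat.factorial_ne_zero _)
      have hmr : (6:ℝ) ≤ (m:ℝ) := by exact_mod_cast hm
      have hexp : 2*(m+1) = 2*m + 2 := by ring
      have hexp2 : 2*(m+1)-1 = (2*m-1)+2 := by omega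
      rw [hfac, hexp2, hexp]
      rw [pow_add, pow_add]
      push_cast
      -- goal now in terms of A, B, C, F
      have hCexp : (3:ℝ)^(m+1) = 3*C := by rw [pow_succ, hC]; ring
      rw [hCexp]
      have hQpos : (0:ℝ) < (C-1)*F := by nlinarith
      have h468 : (3969/25 : ℝ) ≤ 3*((2*(m:ℝ)+1)*(2*(m:ℝ))) := by nlinarith
      calc A * ((63:ℝ)/10)^2 * (6 + B * 2^2)
          = (3969/25) * (A * (3/2 + B)) := by ring
        _ ≤ (3969/25) * (A * (6 + B)) := by nlinarith
        _ < (3969/25) * (14*(m:ℝ) * (6*((C-1)*F))) := by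
            have h := ih
            nlinarith
        _ ≤ (3*((2*(m:ℝ)+1)*(2*(m:ℝ)))) * (14*(m:ℝ) * (6*((C-1)*F))) := by
            apply mul_le_mul_of_nonneg_right h468
            positivity
        _ ≤ 14*((m:ℝ)+1) * (6*(3*C-1)*((2*(m:ℝ)+1)*(2*(m:ℝ))*F)) := by
            have hlast : (0:ℝ) ≤ ((2*(m:ℝ)+1)*(2*(m:ℝ)))*F*(2*(m:ℝ)+3*C-1) := by
              apply mul_nonneg
              apply mul_nonneg
              · nlinarith
              · linarith
              · nlinarith
            nlinarith [hlast]

theorem stmt_19 (n : ℕ) (hodd : Odd n) (hn : 11 ≤ n) :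
    (2 * π) ^ (n + 1) * (6 + 2 ^ n) / (6 * ((3 : ℝ) ^ ((n + 1) / 2) - 1) * (Nat.factorial n)) <
      7 * n + 7 := by
  obtain ⟨k, hk⟩ := hodd
  set m := k + 1 with hm
  have hm6 : 6 ≤ m := by omega
  have hn2 : n = 2*m - 1 := by omega
  have hdiv : (n + 1) / 2 = m := by omega
  have hn1 : n + 1 = 2*m := by omega
  have hClb : (729:ℝ) ≤ (3:ℝ)^m := by
    calc (729:ℝ) = 3^6 := by norm_num
    _ ≤ 3^m := pow_le_pow_right₀ (by norm_num) hm6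
  have hdenom : (0:ℝ) < 6 * ((3 : ℝ) ^ ((n + 1) / 2) - 1) * (Nat.factorial n) := by
    rw [hdiv]
    have : (0:ℝ) < (Nat.factorial n : ℝ) := by exact_mod_cast Nat.factorial_pos n
    nlinarith
  rw [div_lt_iff₀ hdenom, hdiv, hn1, hn2]
  have hpi : (2*π) < 63/10 := by
    have := Real.pi_lt_d2
    linarith
  have hpow : (2*π)^(2*m) < ((63:ℝ)/10)^(2*m) := by
    apply pow_lt_pow_left₀ hpi (by positivity)
    omega
  have hkey := key_19 m hm6
  have hBpos : (0:ℝ) < 6 + 2^(2*m-1) := by positivity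
  have h1 : (2*π)^(2*m) * (6 + 2^(2*m-1)) < ((63:ℝ)/10)^(2*m) * (6 + 2^(2*m-1)) := by
    exact mul_lt_mul_of_pos_right hpow hBpos
  have h2 : (7:ℝ) * ((2*m-1 : ℕ):ℝ) + 7 = 14*m := by
    have : ((2*m-1 : ℕ) : ℝ) = 2*(m:ℝ) - 1 := by
      have h1 : (1:ℕ) ≤ 2*m := by omega
      push_cast [Nat.cast_sub h1]; ring
    rw [this]; ring
  rw [h2]
  calc (2*π)^(2*m) * (6 + 2^(2*m-1)) < ((63:ℝ)/10)^(2*m) * (6 + 2^(2*m-1)) := h1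
  _ < (14*m) * (6 * ((3:ℝ)^m - 1) * (Nat.factorial (2*m-1))) := hkey
  _ = (14*m) * (6 * ((3:ℝ)^m - 1) * (Nat.factorial (2*m-1))) := rfl
end
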